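/- arXiv:1802.01011 — 5 statements merged into one kernel-verified Lean document; each statement's English description precedes it below -/
import Mathlib

section
/- Let φ = (1+√5)/2, R = diag(e^{-4πi/5}, e^{3πi/5}), F = [[φ⁻¹, φ^{-1/2}], [φ^{-1/2}, -φ⁻¹}], and B = F·R·F. Then R·B·R = B·R·B, i.e., the assignment σ₁ ↦ R, σ₂ ↦ B satisfies the braid relation of the braid group B₃ and hence defines a representation of B₃ on ℂ². -/
open Matrix

/-- The golden ratio φ = (1 + √5)/2. -/
noncomputable def φ : ℝ := (1 + Real.sqrt 5) / 2

/-- The Fibonacci R-matrix `R = diag(e^{-4πi/5}, e^{3πi/5})`, the action of σ₁. -/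
noncomputable def R : Matrix (Fin 2) (Fin 2) ℂ :=
  !![Complex.exp (-(4 * Real.pi * Complex.I) / 5), 0;
     0, Complex.exp (3 * Real.pi * Complex.I / 5)]

/-- The Fibonacci F-matrix, as a complex matrix. -/
noncomputable def F : Matrix (Fin 2) (Fin 2) ℂ :=
  !![((φ⁻¹ : ℝ) : ℂ), (((Real.sqrt φ)⁻¹ : ℝ) : ℂ);
     (((Real.sqrt φ)⁻¹ : ℝ) : ℂ), -((φ⁻¹ : ℝ) : ℂ)]

/-- The action of σ₂ on the encoded qubit: `B = F·R·F`. -/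
noncomputable def B : Matrix (Fin 2) (Fin 2) ℂ := F * R * F

lemma key_braid (z p b : ℂ) (hp : p ^ 2 = p + 1) (hz : z ^ 2 = p * z - 1)
    (hb : b ^ 2 = p - 1) :
    !![-z, 0; 0, z ^ 3] * (!![p - 1, b; b, -(p - 1)] * !![-z, 0; 0, z ^ 3] * !![p - 1, b; b, -(p - 1)]) * !![-z, 0; 0, z ^ 3] =
    (!![p - 1, b; b, -(p - 1)] * !![-z, 0; 0, z ^ 3] * !![p - 1, b; b, -(p - 1)]) * !![-z, 0; 0, z ^ 3] * (!![p - 1, b; b, -(p - 1)] * !![-z, 0; 0, z ^ 3] * !![p - 1, b; b, -(p - 1)]) := by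
  ext i j
  fin_cases i <;> fin_cases j <;>
    simp [Matrix.mul_apply, Fin.sum_univ_two]
  · linear_combination (p + p*z + p^2 + (-3)*p^2*z + (-4)*p^3 + (-2)*p^3*z + (-1)*p^4 + (8)*p^4*z + (6)*p^5 + (-2)*p^6 + (-8)*p^6*z + (-2)*p^7 + (3)*p^7*z + p^8 + (2)*p^8*z + (-1)*p^9*z) * hp + ((2)*z^5 + z^7 + p + p*z + (-1)*p*z^2 + (-3)*p*z^3 + p*z^4 + (-5)*p*z^5 + p*z^6 + (-3)*p*z^7 + (2)*p^2 + (-1)*p^2*z + (-1)*p^2*z^2 + (5)*p^2*z^3 + (-2)*p^2*z^4 + (5)*p^2*z^5 + (-3)*p^2*z^6 + (3)*p^2*z^7 + (-4)*p^3 + (-4)*p^3*z + (3)*p^3*z^2 + (-1)*p^3*z^3 + (2)*p^3*z^4 + (-4)*p^3*z^5 + (3)*p^3*z^6 + (-1)*p^3*z^7 + (-6)*p^4 + (5)*p^4*z + (2)*p^4*z^2 + (-1)*p^4*z^3 + (-3)*p^4*z^4 + (3)*p^4*z^5 + (-1)*p^4*z^6 + (9)*p^5 + (4)*p^5*z + (-4)*p^5*z^2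 + (-2)*p^5*z^3 + (3)*p^5*z^4 + (-1)*p^5*z^5 + (5)*p^6 + (-7)*p^6*z + (-1)*p^6*z^2 + (3)*p^6*z^3 + (-1)*p^6*z^4 + (-10)*p^7 + (3)*p^7*z^2 + (-1)*p^7*z^3 + p^8 + (3)*p^8*z + (-1)*p^8*z^2 + (3)*p^9 + (-1)*p^9*z + (-1)*p^10) * hz + ((-2)*z^5 + (-3)*z^7 + z^7*b^2 + (-1)*z^9 + (6)*p*z^5 + (5)*p*z^7 + (2)*p*z^9 + (-3)*p^2*z^5 + (-2)*p^2*z^7 + (-1)*p^2*z^9) * hb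
  · linear_combination ((-1)*p*b + (3)*p^2*z*b + (5)*p^3*b + (-1)*p^4*b + (-10)*p^4*z*b + (-7)*p^5*b + (3)*p^5*z*b + (3)*p^6*b + (9)*p^6*z*b + (2)*p^7*b + (-4)*p^7*z*b + (-1)*p^8*b + (-2)*p^8*z*b + p^9*z*b) * hp + ((-1)*z^3*b + (-3)*z^5*b + (-1)*z^7*b + (-1)*p*b + p*z^2*b + (3)*p*z^3*b + (-2)*p*z^4*b + (5)*p*z^5*b + (-1)*p*z^6*b + (3)*p*z^7*b + (-1)*p^2*b + (2)*p^2*z*b + p^2*z^2*b + (-4)*p^2*z^3*b + (2)*p^2*z^4*b + (-3)*p^2*z^5*b + (3)*p^2*z^6*b + (-3)*p^2*z^7*b + (6)*p^3*b + (2)*p^3*z*b + (-4)*p^3*z^2*b + (3)*p^3*z^5*b + (-3)*p^3*z^6*b + p^3*z^7*b + (4)*p^4*b + (-7)*p^4*z*b + (-2)*p^4*z^2*b + (3)*p^4*z^3*b + (2)*p^4*z^4*b + (-3)*p^4*z^5*b + p^4*z^6*b + (-13)*p^5*b + (-3)*p^5*z*b + (6)*p^5*z^2*b + p^5*z^3*b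 + (-3)*p^5*z^4*b + p^5*z^5*b + (-3)*p^6*b + (9)*p^6*z*b + (-3)*p^6*z^3*b + p^6*z^4*b + (12)*p^7*b + (-1)*p^7*z*b + (-3)*p^7*z^2*b + p^7*z^3*b + (-2)*p^8*b + (-3)*p^8*z*b + p^8*z^2*b + (-3)*p^9*b + p^9*z*b + p^10*b) * hz + ((2)*z^5*b + (2)*z^7*b + (-2)*p*z^5*b + (-2)*p*z^7*b) * hb
  · linear_combination ((-1)*p*b + (3)*p^2*z*b + (5)*p^3*b + (-1)*p^4*b + (-10)*p^4*z*b + (-7)*p^5*b + (3)*p^5*z*b + (3)*p^6*b + (9)*p^6*z*b + (2)*p^7*b + (-4)*p^7*z*b + (-1)*p^8*b + (-2)*p^8*z*b + p^9*z*b) * hp + ((-1)*z^3*b + (-3)*z^5*b + (-1)*z^7*b + (-1)*p*b + p*z^2*b + (3)*p*z^3*b + (-2)*p*z^4*b + (5)*p*z^5*b + (-1)*p*z^6*b + (3)*p*z^7*b + (-1)*p^2*b + (2)*p^2*z*b + p^2*z^2*b + (-4)*p^2*z^3*b + (2)*p^2*z^4*b + (-3)*p^2*z^5*b + (3)*p^2*z^6*b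 + (-3)*p^2*z^7*b + (6)*p^3*b + (2)*p^3*z*b + (-4)*p^3*z^2*b + (3)*p^3*z^5*b + (-3)*p^3*z^6*b + p^3*z^7*b + (4)*p^4*b + (-7)*p^4*z*b + (-2)*p^4*z^2*b + (3)*p^4*z^3*b + (2)*p^4*z^4*b + (-3)*p^4*z^5*b + p^4*z^6*b + (-13)*p^5*b + (-3)*p^5*z*b + (6)*p^5*z^2*b + p^5*z^3*b + (-3)*p^5*z^4*b + p^5*z^5*b + (-3)*p^6*b + (9)*p^6*z*b + (-3)*p^6*z^3*b + p^6*z^4*b + (12)*p^7*b + (-1)*p^7*z*b + (-3)*p^7*z^2*b + p^7*z^3*b + (-2)*p^8*b + (-3)*p^8*z*b + p^8*z^2*b + (-3)*p^9*b + p^9*z*b + p^10*b) * hz + ((2)*z^5*b + (2)*z^7*b + (-2)*p*z^5*b + (-2)*p*z^7*b) * hb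
  · linear_combination ((-1)*p + p*z + (4)*p^2 + (3)*p^2*z + (4)*p^3 + (-11)*p^3*z + (-14)*p^4 + (-6)*p^4*z + (-1)*p^5 + (24)*p^5*z + (13)*p^6 + (-1)*p^6*z + (-3)*p^7 + (-16)*p^7*z + (-3)*p^8 + (4)*p^8*z + p^9 + (3)*p^9*z + (-1)*p^10*z) * hp + ((-1)*z^3 + (-2)*z^5 + (-1)*p + p*z + p*z^2 + (2)*p*z^3 + (-2)*p*z^4 + (6)*p*z^5 + (2)*p*z^7 + (3)*p^2 + (3)*p^2*z + (-2)*p^2*z^2 + (-5)*p^2*z^3 + (4)*p^2*z^4 + (-4)*p^2*z^5 + (2)*p^2*z^6 + (-5)*p^2*z^7 + (9)*p^3 + (-6)*p^3*z + (-6)*p^3*z^2 + (5)*p^3*z^3 + p^3*z^4 + p^3*z^5 + (-5)*p^3*z^6 + (4)*p^3*z^7 + (-14)*p^4 + (-11)*p^4*z + (8)*p^4*z^2 + (5)*p^4*z^3 + (-3)*p^4*z^4 + (-4)*p^4*z^5 + (4)*p^4*z^6 + (-1)*p^4*z^7 + (-19)*p^5 + (15)*p^5*z + (8)*p^5*z^2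 + (-7)*p^5*z^3 + (-3)*p^5*z^4 + (4)*p^5*z^5 + (-1)*p^5*z^6 + (26)*p^6 + (10)*p^6*z + (-11)*p^6*z^2 + (-2)*p^6*z^3 + (4)*p^6*z^4 + (-1)*p^6*z^5 + (11)*p^7 + (-15)*p^7*z + (-1)*p^7*z^2 + (4)*p^7*z^3 + (-1)*p^7*z^4 + (-19)*p^8 + (4)*p^8*z^2 + (-1)*p^8*z^3 + p^9 + (4)*p^9*z + (-1)*p^9*z^2 + (4)*p^10 + (-1)*p^10*z + (-1)*p^11) * hz + (z^3 + (3)*z^5 + (-1)*z^5*b^2 + (2)*z^7 + (-2)*p*z^3 + (-5)*p*z^5 + (-6)*p*z^7 + p^2*z^3 + (2)*p^2*z^5 + (3)*p^2*z^7) * hb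

/-- The matrices R and B satisfy the braid relation of B₃: `R·B·R = B·R·B`. -/
theorem braid_relation : R * B * R = B * R * B := by
  have h5 : Real.sqrt 5 ^ 2 = 5 := Real.sq_sqrt (by norm_num)
  have hφpos : 0 < φ := by
    have := Real.sqrt_nonneg 5
    unfold φ; linarith
  have hφsq : φ ^ 2 = φ + 1 := by
    unfold φ; nlinarith [h5]
  set p : ℂ := ((φ : ℝ) : ℂ) with hpdef
  set z : ℂ := Complex.exp (Real.pi * Complex.I / 5) with hzdef
  set b : ℂ := (((Real.sqrt φ)⁻¹ : ℝ) : ℂ) with hbdef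
  have hp : p ^ 2 = p + 1 := by
    rw [hpdef]; exact_mod_cast congrArg (fun x : ℝ => (x : ℂ)) hφsq
  have hzmul : z * Complex.exp (-(Real.pi * Complex.I / 5)) = 1 := by
    rw [hzdef, ← Complex.exp_add]; simp
  have hsum : z + Complex.exp (-(Real.pi * Complex.I / 5)) = p := by
    have harg : (Real.pi * Complex.I / 5 : ℂ) = ((Real.pi / 5 : ℝ) : ℂ) * Complex.I := by
      push_cast; ring
    rw [hzdef, harg, ← neg_mul, Complex.exp_mul_I, Complex.exp_mul_I,
      Complex.cos_neg, Complex.sin_neg, ← Complex.ofReal_cos, ← Complex.ofReal_sin]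
    have hcos : Real.cos (Real.pi / 5) = (1 + Real.sqrt 5) / 4 := Real.cos_pi_div_five
    rw [hpdef]
    push_cast [hcos]
    unfold φ
    push_cast
    ring
  have hz : z ^ 2 = p * z - 1 := by linear_combination z * hsum - hzmul
  have hbr : ((Real.sqrt φ)⁻¹ : ℝ) ^ 2 = φ - 1 := by
    rw [inv_pow, Real.sq_sqrt hφpos.le]
    field_simp
    nlinarith [hφsq]
  have hb : b ^ 2 = p - 1 := by
    rw [hbdef, hpdef]; exact_mod_cast congrArg (fun x : ℝ => (x : ℂ)) hbr
  have ha : ((φ⁻¹ : ℝ) : ℂ) = p - 1 := by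
    have : (φ⁻¹ : ℝ) = φ - 1 := by
      field_simp; nlinarith [hφsq]
    rw [hpdef]; exact_mod_cast congrArg (fun x : ℝ => (x : ℂ)) this
  have hR : R = !![-z, 0; 0, z ^ 3] := by
    have h1 : Complex.exp (-(4 * (Real.pi : ℂ) * Complex.I) / 5) = -z := by
      have : (-(4 * (Real.pi : ℂ) * Complex.I) / 5)
          = Real.pi * Complex.I / 5 + -((Real.pi : ℂ) * Complex.I) := by ring
      rw [this, Complex.exp_add, Complex.exp_neg, Complex.exp_pi_mul_I, hzdef]
      ring
    have h2 : Complex.exp (3 * (Real.pi : ℂ) * Complex.I / 5) = z ^ 3 := by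
      have : (3 * (Real.pi : ℂ) * Complex.I / 5)
          = Real.pi * Complex.I / 5 + (Real.pi * Complex.I / 5 + Real.pi * Complex.I / 5) := by
        ring
      rw [this, Complex.exp_add, Complex.exp_add, hzdef]; ring
    rw [R, h1, h2]
  have hF : F = !![p - 1, b; b, -(p - 1)] := by
    rw [F, ha, hbdef]
  rw [show B = F * R * F from rfl, hR, hF]
  exact key_braid z p b hp hz hb
end

section
/- Let φ = (1+√5)/2, R = diag(e^{-4πi/5}, e^{3πi/5}), F = [[φ⁻¹, φ^{-1/2}], [φ^{-1/2}, -φ⁻¹]], and B = F·R·F. Then there exists a nonzero complex scalar c such that R⁻⁴·B applied to the vector (1, 0) equals c·(1, -φ^{1/2}). (That is, the braid σ₁⁻⁴σ₂ applied to the qubit state |0⟩ produces the state |β⟩ = (1, -φ^{1/2}), up to a scalar.) -/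
open Matrix

/-! With ω = e^{iπ/5} one has R = diag(-ω, ω³), and ω⁵ = -1 gives R⁻⁴ = diag(-ω, -ω³).
Since φ = 2 cos(π/5) = ω + ω⁻¹, ω is a root of X² - φX + 1. Together with φ² = φ + 1 this
reduces R⁻⁴ B |0⟩ = φ⁻¹ (1, -√φ) to a polynomial identity valid in any field. -/

theorem fibonacci_braid_mulVec_eq {K : Type*} [Field K] {g s ω : K} (hg : g ^ 2 = g + 1)
    (hs : s ^ 2 = g) (hs0 : s ≠ 0) (hω : ω ^ 2 = g * ω - 1) :
    (!![-ω, 0; 0, -ω ^ 3] *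
        (!![g⁻¹, s⁻¹; s⁻¹, -g⁻¹] * !![-ω, 0; 0, ω ^ 3] * !![g⁻¹, s⁻¹; s⁻¹, -g⁻¹])) *ᵥ ![1, 0]
      = g⁻¹ • ![1, -s] := by
  have hg0 : g ≠ 0 := hs ▸ pow_ne_zero 2 hs0
  have hω4 : ω ^ 4 = ω - g := by
    linear_combination (ω ^ 2 + g * ω - 1 + g ^ 2) * hω + (ω * (g + 1) - 1) * hg
  have hω6 : ω ^ 6 = -ω := by linear_combination ω ^ 2 * hω4 + ω * hω
  simp only [mul_fin_two, mulVec_fin_two, of_apply, cons_val_zero, cons_val_one, smul_cons,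
    smul_empty, smul_eq_mul, vecCons_inj, and_true, mul_zero, zero_mul]
  constructor
  · field_simp
    linear_combination (ω ^ 2 - g) * hs + g * hω + g * hg - g ^ 2 * hω4
  · field_simp
    linear_combination hω4 + hω6 + hs

theorem Matrix.inv_fin_two_diagonal_pow {K : Type*} [CommRing K] {a b c d : K} {n : ℕ}
    (hac : c * a ^ n = 1) (hbd : d * b ^ n = 1) : !![a, 0; 0, b]⁻¹ ^ n = !![c, 0; 0, d] := by
  have hdiag (x y : K) : !![x, 0; 0, y] = diagonal ![x, y] := (diagonal_fin_two ![x, y]).symm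
  rw [hdiag, hdiag, inv_pow', diagonal_pow]
  refine inv_eq_left_inv ?_
  rw [diagonal_mul_diagonal, ← diagonal_one]
  congr 1
  funext i
  fin_cases i
  exacts [hac, hbd]

theorem Complex.exp_mul_I_sq (x : ℂ) : exp (x * I) ^ 2 = 2 * cos x * exp (x * I) - 1 := by
  rw [two_cos, sq, add_mul, ← exp_add, ← exp_add, neg_mul, neg_add_cancel, exp_zero]
  ring

open Complex in
local notation "ω" => exp (Real.pi / 5 * I)

open Complex in
theorem exp_pi_div_five_mul_I_pow_five : ω ^ 5 = -1 := by
  rw [← exp_nat_mul, ← exp_pi_mul_I]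
  congr 1
  push_cast
  ring

open Complex in
theorem exp_pi_div_five_mul_I_sq : ω ^ 2 = φ * ω - 1 := by
  have two_cos_eq : 2 * cos (Real.pi / 5) = φ := by
    rw [show (Real.pi : ℂ) / 5 = ((Real.pi / 5 : ℝ) : ℂ) by push_cast; rfl, ← ofReal_cos,
      Real.cos_pi_div_five, φ]
    push_cast
    ring
  rw [exp_mul_I_sq, two_cos_eq]

open Complex in
theorem R_eq : R = !![-ω, 0; 0, ω ^ 3] := by
  have h₀ : exp (-(4 * Real.pi * I) / 5) = -ω := by
    rw [show -(4 * Real.pi * I) / 5 = Real.pi / 5 * I - Real.pi * I by ring, exp_sub,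
      exp_pi_mul_I, div_neg, div_one]
  have h₁ : exp (3 * Real.pi * I / 5) = ω ^ 3 := by
    rw [← exp_nat_mul]
    congr 1
    push_cast
    ring
  rw [R, h₀, h₁]

theorem R_inv_pow_four : R⁻¹ ^ 4 = !![-ω, 0; 0, -ω ^ 3] := by
  have h := exp_pi_div_five_mul_I_pow_five
  rw [R_eq]
  exact Matrix.inv_fin_two_diagonal_pow (by linear_combination -h)
    (by linear_combination -(ω ^ 10 - ω ^ 5 + 1) * h)

/-- The braid σ₁⁻⁴σ₂ applied to |0⟩ = (1,0) produces |β⟩ = (1, -φ^{1/2}) up to a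
nonzero scalar. -/
theorem braid_creates_beta :
    ∃ c : ℂ, c ≠ 0 ∧
      (R⁻¹ ^ 4 * B) *ᵥ ![1, 0] = c • ![(1 : ℂ), -((Real.sqrt φ : ℝ) : ℂ)] := by
  have hφ : (φ : ℂ) ^ 2 = φ + 1 := by exact_mod_cast Real.goldenRatio_sq
  have hs : ((√φ : ℝ) : ℂ) ^ 2 = φ := by exact_mod_cast Real.sq_sqrt Real.goldenRatio_pos.le
  have hs0 : ((√φ : ℝ) : ℂ) ≠ 0 := by exact_mod_cast (Real.sqrt_pos.2 Real.goldenRatio_pos).ne'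
  refine ⟨(φ : ℂ)⁻¹, by exact_mod_cast inv_ne_zero Real.goldenRatio_ne_zero, ?_⟩
  rw [R_inv_pow_four, B, R_eq, F]
  push_cast
  exact fibonacci_braid_mulVec_eq hφ hs hs0 exp_pi_div_five_mul_I_sq
end

section
/- Let φ = (1+√5)/2, D₃ = diag(1, 1, 1, -φ⁻¹), D₄ = diag(1, 1, 1, -φ⁻²) (4×4 complex diagonal matrices), X = [[0,1],[1,0]], I₂ the 2×2 identity, and CZ = diag(1, 1, 1, -1). Then ((X⊗X)·D₄·(X⊗X)) · ((X⊗I₂)·D₄·(X⊗I₂)) · ((I₂⊗X)·D₄·(I₂⊗X)) · D₃² = (-φ⁻²)·CZ. In particular this composition equals the controlled-Z gate CZ up to a nonzero overall scalar. -/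
open Matrix

/-- Kronecker (tensor) product of matrices, reindexed to `Fin (m·p)` with the
row-major convention `(i, j) ↦ p·i + j`. -/
def kron {m n p q : ℕ} (A : Matrix (Fin m) (Fin n) ℂ) (B : Matrix (Fin p) (Fin q) ℂ) :
    Matrix (Fin (m * p)) (Fin (n * q)) ℂ :=
  Matrix.reindex finProdFinEquiv finProdFinEquiv (Matrix.kroneckerMap (· * ·) A B)

/-- `D₃ = diag(1, 1, 1, -φ⁻¹)`. -/
noncomputable def D₃ : Matrix (Fin 4) (Fin 4) ℂ :=
  Matrix.diagonal ![1, 1, 1, -(φ : ℂ)⁻¹]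

/-- `D₄ = diag(1, 1, 1, -φ⁻²)`. -/
noncomputable def D₄ : Matrix (Fin 4) (Fin 4) ℂ :=
  Matrix.diagonal ![1, 1, 1, -(φ : ℂ)⁻¹ ^ 2]

/-- The Pauli-X gate. -/
def X : Matrix (Fin 2) (Fin 2) ℂ := !![0, 1; 1, 0]

/-- The controlled-Z gate `CZ = diag(1, 1, 1, -1)`. -/
def CZ : Matrix (Fin 4) (Fin 4) ℂ := Matrix.diagonal ![1, 1, 1, -1]


lemma kronXX : kron X X = !![0,0,0,1;0,0,1,0;0,1,0,0;1,0,0,0] := by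
  ext i j
  fin_cases i <;> fin_cases j <;>
    simp [kron, X, Matrix.reindex_apply, finProdFinEquiv, Matrix.kroneckerMap, Fin.divNat,
      Fin.modNat] <;>
    norm_num [Matrix.vecHead, Matrix.vecTail, (show ((3:Fin 4):ℕ) = 3 from rfl)]

lemma kronX1 : kron X (1 : Matrix (Fin 2) (Fin 2) ℂ) = !![0,0,1,0;0,0,0,1;1,0,0,0;0,1,0,0] := by
  ext i j
  fin_cases i <;> fin_cases j <;>
    simp [kron, X, Matrix.reindex_apply, finProdFinEquiv, Matrix.kroneckerMap, Fin.divNat,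
      Fin.modNat, Matrix.one_apply, Fin.ext_iff] <;>
    norm_num [Matrix.vecHead, Matrix.vecTail, (show ((3:Fin 4):ℕ) = 3 from rfl)]

lemma kron1X : kron (1 : Matrix (Fin 2) (Fin 2) ℂ) X = !![0,1,0,0;1,0,0,0;0,0,0,1;0,0,1,0] := by
  ext i j
  fin_cases i <;> fin_cases j <;>
    simp [kron, X, Matrix.reindex_apply, finProdFinEquiv, Matrix.kroneckerMap, Fin.divNat,
      Fin.modNat, Matrix.one_apply, Fin.ext_iff] <;>
    norm_num [Matrix.vecHead, Matrix.vecTail, (show ((3:Fin 4):ℕ) = 3 from rfl)]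

lemma conj1 : !![(0:ℂ),0,0,1;0,0,1,0;0,1,0,0;1,0,0,0] * D₄ * !![(0:ℂ),0,0,1;0,0,1,0;0,1,0,0;1,0,0,0]
    = Matrix.diagonal ![-(φ : ℂ)⁻¹ ^ 2, 1, 1, 1] := by
  ext i j
  fin_cases i <;> fin_cases j <;>
    simp [D₄, Matrix.mul_apply, Fin.sum_univ_four, Matrix.diagonal, Matrix.vecHead, Matrix.vecTail]

lemma conj2 : !![(0:ℂ),0,1,0;0,0,0,1;1,0,0,0;0,1,0,0] * D₄ * !![(0:ℂ),0,1,0;0,0,0,1;1,0,0,0;0,1,0,0]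
    = Matrix.diagonal ![1, -(φ : ℂ)⁻¹ ^ 2, 1, 1] := by
  ext i j
  fin_cases i <;> fin_cases j <;>
    simp [D₄, Matrix.mul_apply, Fin.sum_univ_four, Matrix.diagonal, Matrix.vecHead, Matrix.vecTail]

lemma conj3 : !![(0:ℂ),1,0,0;1,0,0,0;0,0,0,1;0,0,1,0] * D₄ * !![(0:ℂ),1,0,0;1,0,0,0;0,0,0,1;0,0,1,0]
    = Matrix.diagonal ![1, 1, -(φ : ℂ)⁻¹ ^ 2, 1] := by
  ext i j
  fin_cases i <;> fin_cases j <;>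
    simp [D₄, Matrix.mul_apply, Fin.sum_univ_four, Matrix.diagonal, Matrix.vecHead, Matrix.vecTail]

/-- Composing the three Pauli-X conjugates of `D₄` with `D₃²` yields the
controlled-Z gate up to the nonzero scalar `-φ⁻²`. -/
theorem cz_up_to_scalar :
    (kron X X * D₄ * kron X X) * (kron X (1 : Matrix (Fin 2) (Fin 2) ℂ) * D₄ * kron X (1 : Matrix (Fin 2) (Fin 2) ℂ)) *
      (kron (1 : Matrix (Fin 2) (Fin 2) ℂ) X * D₄ * kron (1 : Matrix (Fin 2) (Fin 2) ℂ) X) * D₃ ^ 2 = (-(φ : ℂ)⁻¹ ^ 2) • CZ := by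
  rw [kronXX, kronX1, kron1X, conj1, conj2, conj3]
  have h : D₃ ^ 2 = D₃ * D₃ := sq D₃
  rw [h, D₃, CZ, Matrix.diagonal_mul_diagonal, Matrix.diagonal_mul_diagonal,
    Matrix.diagonal_mul_diagonal, Matrix.diagonal_mul_diagonal]
  ext i j
  fin_cases i <;> fin_cases j <;>
    simp [Matrix.diagonal, Matrix.vecHead, Matrix.vecTail] <;> ring
end

section
/- Let φ = (1+√5)/2, R = diag(e^{-4πi/5}, e^{3πi/5}), F = [[φ⁻¹, φ^{-1/2}], [φ^{-1/2}, -φ⁻¹]], and B = F·R·F (so B⁻² = F·R⁻²·F since F² = I₂). Then there exists a nonzero complex scalar c such that R²·B⁻² applied to the vector (1, 0) equals c·(φ^{1/2}·cos(2π/5), -i·sin(2π/5)). (That is, the braid σ₁²σ₂⁻² applied to |0⟩ produces the qubit state (φ^{1/2}cos(2π/5), -i sin(2π/5)), up to a scalar.) -/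
/-!
With `ζ = e^{2πi/5}`, only the ratio `v / u` of the eigenvalues of `R = diag(u, v)` matters:
since `F² = 1`, the braid acts on `|0⟩` as `R² F R⁻² F`, which for the reflection
`F = [[a, b], [b, -a]]` sends `|0⟩` to `(a² + b² (u/v)², a b ((v/u)² - 1))`, and here
`(v/u)² = e^{14πi/5} = ζ²`. With `a = b² = φ⁻¹`, the second entry is `a b ζ (ζ - ζ⁻¹)`, a
multiple of `i sin(2π/5)`, and the first is a multiple of `cos(2π/5)` precisely because
`ζ² + ζ⁻² = 2 cos(4π/5) = -φ` and `φ⁻¹ + 1 = φ`.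
-/

open Matrix Complex

namespace Matrix

variable {n K : Type*} [Fintype n] [DecidableEq n] [Field K]

theorem inv_pow_conj_of_mul_self_eq_one {P : Matrix n n K} (hP : P * P = 1)
    (M : Matrix n n K) (k : ℕ) : (P * M * P)⁻¹ ^ k = P * M⁻¹ ^ k * P := by
  rw [mul_inv_rev, mul_inv_rev, inv_eq_left_inv hP, ← Matrix.mul_assoc]
  induction k with
  | zero => simp [hP]
  | succ k ih =>
    rw [pow_succ, ih, pow_succ]
    simp only [Matrix.mul_assoc]
    rw [← Matrix.mul_assoc P P, hP, Matrix.one_mul]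

theorem fin_two_reflection_mul_self {a b : K} (h : a ^ 2 + b ^ 2 = 1) :
    !![a, b; b, -a] * !![a, b; b, -a] = 1 := by
  ext i j
  fin_cases i <;> fin_cases j <;> simp
  · linear_combination h
  · ring
  · ring
  · linear_combination h

theorem inv_diagonal_fin_two {u v : K} (hu : u ≠ 0) (hv : v ≠ 0) :
    (diagonal ![u, v])⁻¹ = diagonal ![u⁻¹, v⁻¹] := by
  refine inv_eq_left_inv ?_
  rw [diagonal_mul_diagonal, ← diagonal_one]
  congr 1
  ext i
  fin_cases i <;> simp [hu, hv]

theorem diagonal_sq_mul_conj_inv_sq_mulVec (a b : K) {u v : K} (hu : u ≠ 0) (hv : v ≠ 0) :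
    (diagonal ![u, v] ^ 2 * (!![a, b; b, -a] * (diagonal ![u, v])⁻¹ ^ 2 * !![a, b; b, -a]))
      *ᵥ ![1, 0] = ![a ^ 2 + b ^ 2 * (u / v) ^ 2, a * b * ((v / u) ^ 2 - 1)] := by
  rw [inv_diagonal_fin_two hu hv, diagonal_pow, diagonal_pow]
  ext i
  fin_cases i
  · simp [mulVec, vecMul, dotProduct, Fin.sum_univ_two]
    field_simp
  · simp [mulVec, vecMul, dotProduct, Fin.sum_univ_two]
    field_simp
    ring

end Matrix

theorem two_cos_eq_exp_add_inv (x : ℝ) :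
    2 * (Real.cos x : ℂ) = exp (x * I) + (exp (x * I))⁻¹ := by
  rw [ofReal_cos, two_cos, ← exp_neg, neg_mul]

theorem two_I_sin_eq_exp_sub_inv (x : ℝ) :
    2 * I * (Real.sin x : ℂ) = exp (x * I) - (exp (x * I))⁻¹ := by
  rw [ofReal_sin, mul_assoc, mul_comm I, ← mul_assoc, two_sin, ← exp_neg, neg_mul]
  ring_nf
  rw [I_sq]
  ring

theorem φ_pos : 0 < φ := by rw [φ]; positivity

theorem φ_sq : φ ^ 2 = φ + 1 := by
  have h5 : Real.sqrt 5 ^ 2 = 5 := Real.sq_sqrt (by norm_num)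
  rw [φ]
  linear_combination h5 / 4

theorem inv_φ : φ⁻¹ = φ - 1 :=
  inv_eq_of_mul_eq_one_right (by linear_combination φ_sq)

theorem inv_sqrt_φ_sq : (Real.sqrt φ)⁻¹ ^ 2 = φ⁻¹ := by
  rw [inv_pow, Real.sq_sqrt φ_pos.le]

theorem two_cos_four_pi_div_five : 2 * Real.cos (4 * Real.pi / 5) = -φ := by
  rw [show 4 * Real.pi / 5 = Real.pi - Real.pi / 5 by ring, Real.cos_pi_sub,
    Real.cos_pi_div_five, φ]
  ring

theorem F_mul_self : F * F = 1 := by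
  refine fin_two_reflection_mul_self ?_
  have h : φ⁻¹ ^ 2 + (Real.sqrt φ)⁻¹ ^ 2 = 1 := by
    rw [inv_sqrt_φ_sq, inv_φ]
    linear_combination φ_sq
  exact_mod_cast h

theorem R_eq_diagonal :
    R = diagonal ![exp (-(4 * Real.pi * I) / 5), exp (3 * Real.pi * I / 5)] := by
  ext i j
  fin_cases i <;> fin_cases j <;> rfl

noncomputable def ζ : ℂ := exp (((2 * Real.pi / 5 : ℝ) : ℂ) * I)

theorem ζ_ne_zero : ζ ≠ 0 := exp_ne_zero _

theorem two_cos_two_pi_div_five : 2 * (Real.cos (2 * Real.pi / 5) : ℂ) = ζ + ζ⁻¹ :=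
  two_cos_eq_exp_add_inv _

theorem two_I_sin_two_pi_div_five : 2 * I * (Real.sin (2 * Real.pi / 5) : ℂ) = ζ - ζ⁻¹ :=
  two_I_sin_eq_exp_sub_inv _

theorem ζ_sq_add_inv_sq : ζ ^ 2 + (ζ ^ 2)⁻¹ = -φ := by
  have h : exp (((4 * Real.pi / 5 : ℝ) : ℂ) * I) = ζ ^ 2 := by
    rw [ζ, ← exp_nat_mul]
    push_cast
    ring_nf
  rw [← h, ← two_cos_eq_exp_add_inv]
  exact_mod_cast two_cos_four_pi_div_five

theorem R_eigenvalue_ratio_sq :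
    (exp (3 * Real.pi * I / 5) / exp (-(4 * Real.pi * I) / 5)) ^ 2 = ζ ^ 2 := by
  rw [ζ, ← exp_sub, ← exp_nat_mul, ← exp_nat_mul, exp_eq_exp_iff_exists_int]
  exact ⟨1, by push_cast; ring⟩

/-- The braid σ₁²σ₂⁻² applied to |0⟩ = (1,0) produces the qubit state
`(φ^{1/2}·cos(2π/5), -i·sin(2π/5))` up to a nonzero scalar. -/
theorem braid_creates_ancilla_qubit :
    ∃ c : ℂ, c ≠ 0 ∧
      (R ^ 2 * B⁻¹ ^ 2) *ᵥ ![1, 0] =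
        c • ![((Real.sqrt φ * Real.cos (2 * Real.pi / 5) : ℝ) : ℂ),
              -Complex.I * ((Real.sin (2 * Real.pi / 5) : ℝ) : ℂ)] := by
  have ha : ((φ⁻¹ : ℝ) : ℂ) = φ - 1 := by exact_mod_cast inv_φ
  have hb : (((Real.sqrt φ)⁻¹ : ℝ) : ℂ) ^ 2 = ((φ⁻¹ : ℝ) : ℂ) := by
    rw [← ofReal_pow, inv_sqrt_φ_sq]
  have hbs : (((Real.sqrt φ)⁻¹ : ℝ) : ℂ) * (Real.sqrt φ : ℂ) = 1 := by
    rw [← ofReal_mul, inv_mul_cancel₀ (Real.sqrt_pos.2 φ_pos).ne', ofReal_one]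
  set a : ℂ := ((φ⁻¹ : ℝ) : ℂ)
  set b : ℂ := (((Real.sqrt φ)⁻¹ : ℝ) : ℂ)
  have hv : (R ^ 2 * B⁻¹ ^ 2) *ᵥ ![1, 0] =
      ![a ^ 2 + b ^ 2 * (ζ ^ 2)⁻¹, a * b * (ζ ^ 2 - 1)] := by
    rw [B, inv_pow_conj_of_mul_self_eq_one F_mul_self, R_eq_diagonal, F,
      diagonal_sq_mul_conj_inv_sq_mulVec _ _ (exp_ne_zero _) (exp_ne_zero _), ← inv_div,
      inv_pow, R_eigenvalue_ratio_sq]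
  have hζ : ζ * ζ⁻¹ = 1 := mul_inv_cancel₀ ζ_ne_zero
  have hb0 : b ≠ 0 := left_ne_zero_of_mul_eq_one hbs
  refine ⟨-2 * a * b * ζ, by simp [← hb, hb0, ζ_ne_zero], ?_⟩
  rw [hv, smul_cons, smul_cons, smul_empty, smul_eq_mul, smul_eq_mul, ofReal_mul]
  congr 1
  · linear_combination (ζ ^ 2)⁻¹ * hb + a * b * ζ * (Real.sqrt φ : ℂ) * two_cos_two_pi_div_five
      + a * b * (Real.sqrt φ : ℂ) * hζ + a * (ζ ^ 2 + 1) * hbs + a * ha + a * ζ_sq_add_inv_sq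
  congr 1
  linear_combination -a * b * ζ * two_I_sin_two_pi_div_five + a * b * hζ
end

section
/- Let φ = (1+√5)/2, α = (1, φ^{1/2}) ∈ ℂ², β = (1, -φ^{1/2}) ∈ ℂ², ψ = (φ^{1/2}cos(2π/5), -i·sin(2π/5)) ∈ ℂ², CZ = diag(1, 1, 1, -1), and I₂ the 2×2 identity. Then (CZ ⊗ I₂) · (I₂ ⊗ CZ) applied to the three-qubit state α ⊗ ψ ⊗ α equals φ^{1/2}cos(2π/5) · (α ⊗ e₀ ⊗ α) − i·sin(2π/5) · (β ⊗ e₁ ⊗ β), where e₀ = (1,0) and e₁ = (0,1). (This is the ancilla state |Γ⟩ = φ^{1/2}cos(2π/5)|α0α⟩ − i sin(2π/5)|β1β⟩.) -/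
open Matrix

/-- Kronecker (tensor) product of vectors, with the row-major indexing. -/
def vkron {m p : ℕ} (v : Fin m → ℂ) (w : Fin p → ℂ) : Fin (m * p) → ℂ :=
  fun i => v (finProdFinEquiv.symm i).1 * w (finProdFinEquiv.symm i).2

/-- The single-qubit state `|α⟩ = (1, φ^{1/2})`. -/
noncomputable def α : Fin 2 → ℂ := ![1, ((Real.sqrt φ : ℝ) : ℂ)]

/-- The single-qubit state `|β⟩ = (1, -φ^{1/2})`. -/
noncomputable def β : Fin 2 → ℂ := ![1, -((Real.sqrt φ : ℝ) : ℂ)]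

/-- The single-qubit state `ψ = (φ^{1/2}·cos(2π/5), -i·sin(2π/5))`. -/
noncomputable def ψ : Fin 2 → ℂ :=
  ![((Real.sqrt φ * Real.cos (2 * Real.pi / 5) : ℝ) : ℂ),
    -Complex.I * ((Real.sin (2 * Real.pi / 5) : ℝ) : ℂ)]

/-- The standard basis state `e₀ = |0⟩ = (1, 0)`. -/
def e₀ : Fin 2 → ℂ := ![1, 0]

/-- The standard basis state `e₁ = |1⟩ = (0, 1)`. -/
def e₁ : Fin 2 → ℂ := ![0, 1]

lemma kron_diagonal_diagonal {m p : ℕ} (a : Fin m → ℂ) (b : Fin p → ℂ) :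
    kron (Matrix.diagonal a) (Matrix.diagonal b)
      = Matrix.diagonal (fun i => a (finProdFinEquiv.symm i).1 * b (finProdFinEquiv.symm i).2) := by
  unfold kron
  rw [Matrix.diagonal_kronecker_diagonal a b, Matrix.reindex_apply,
    Matrix.submatrix_diagonal_equiv]
  rfl

/-- Applying CZ to the left pair and then to the right pair of qubits of the
three-qubit state `α ⊗ ψ ⊗ α` produces the ancilla state
`|Γ⟩ = φ^{1/2}cos(2π/5)·|α0α⟩ − i·sin(2π/5)·|β1β⟩`. -/
theorem gamma_ancilla_preparation :
    (kron CZ (1 : Matrix (Fin 2) (Fin 2) ℂ) * kron (1 : Matrix (Fin 2) (Fin 2) ℂ) CZ) *ᵥ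
        vkron (m := 4) (vkron α ψ) α =
      ((Real.sqrt φ * Real.cos (2 * Real.pi / 5) : ℝ) : ℂ) • vkron (m := 4) (vkron α e₀) α
        + (-Complex.I * ((Real.sin (2 * Real.pi / 5) : ℝ) : ℂ)) • vkron (m := 4) (vkron β e₁) β := by
  have h1 : CZ = Matrix.diagonal ![1, 1, 1, -1] := rfl
  have h2 : (1 : Matrix (Fin 2) (Fin 2) ℂ) = Matrix.diagonal (fun _ => 1) := by
    rw [Matrix.diagonal_one]
  rw [h1, h2, kron_diagonal_diagonal, kron_diagonal_diagonal,
    Matrix.diagonal_mul_diagonal]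
  funext i
  rw [Matrix.mulVec_diagonal]
  fin_cases i <;>
    norm_num [vkron, α, β, ψ, e₀, e₁, finProdFinEquiv, Fin.divNat, Fin.modNat,
      Fin.mk_zero, Fin.mk_one] <;> ring
end
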